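/- Let ℋ be a class of finite simple graphs with unbounded weak vertex-cover number, i.e., for every c ∈ ℕ there is H ∈ ℋ whose weak vertex-cover number exceeds c. Then at least one of the following six alternatives holds: for every n ∈ ℕ some H ∈ ℋ contains the clique K_n as an induced subgraph; or for every n some H ∈ ℋ contains the biclique K_{n,n} as an induced subgraph; or for every n some H ∈ ℋ contains the subdivided star SS_n as an induced subgraph; or for every n some H ∈ ℋ contains the windmill W_n as an induced subgraph; or for every n some H ∈ ℋ contains the triangle packing n·K₃ as an induced subgraph; or for every n some H ∈ ℋ contains the wedge packing n·P₂ as an induced subgraph. -/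

import Mathlib

/-
Taking the vertex set of a maximal family of disjoint non-isolated edges as a weak vertex cover,
unbounded weak vertex-cover number yields arbitrarily many disjoint edges `u v` in which `u` has a
further neighbour `w`: cherries `w - u - v`. Ramsey's theorem applied to the adjacency patterns
between pairs of spines `u v` gives a large clique, a large biclique, or a large induced matching.
In the last case either many cherries share their leaf `w`, which is then the centre of a
subdivided star or of a windmill according to whether it sees the `v`s, or many cherries have
distinct leaves; Ramsey's theorem applied to the triples `w u v` then gives a clique, a biclique, or
pairwise non-adjacent triples, which are triangles or wedges.
-/

open SimpleGraph

/-- `{u,v}` is an isolated edge of `H`: the connected component of `u` and `v` consists of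
exactly this edge. -/
def IsolatedEdge {V : Type*} (H : SimpleGraph V) (u v : V) : Prop :=
  H.Adj u v ∧ (∀ w, H.Adj u w → w = v) ∧ (∀ w, H.Adj v w → w = u)

/-- The subdivided star `SS_n`: center `none`, edges `c x_i` and `x_i y_i`, where
`x_i = some (i,0)` and `y_i = some (i,1)`. -/
def subdividedStar (n : ℕ) : SimpleGraph (Option (Fin n × Fin 2)) :=
  SimpleGraph.fromRel (fun x y =>
    (∃ i, x = none ∧ y = some (i, 0)) ∨ (∃ i, x = some (i, 0) ∧ y = some (i, 1)))

/-- The windmill `W_n`: a matching `x_i y_i` together with a center adjacent to everything. -/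
def windmill (n : ℕ) : SimpleGraph (Option (Fin n × Fin 2)) :=
  SimpleGraph.fromRel (fun x y =>
    (x = none ∧ y ≠ none) ∨ (∃ i, x = some (i, 0) ∧ y = some (i, 1)))

/-- The triangle packing `n·K₃`: the disjoint union of `n` triangles. -/
def trianglePacking (n : ℕ) : SimpleGraph (Fin n × Fin 3) :=
  SimpleGraph.fromRel (fun x y => x.1 = y.1)

/-- The wedge packing `n·P₂`: the disjoint union of `n` paths with two edges. -/
def wedgePacking (n : ℕ) : SimpleGraph (Fin n × Fin 3) :=
  SimpleGraph.fromRel (fun x y =>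
    x.1 = y.1 ∧ ((x.2 = 0 ∧ y.2 = 1) ∨ (x.2 = 1 ∧ y.2 = 2)))

open Finset Function

variable {V ι κ α β : Type*}

def IsWeakVertexCover (G : SimpleGraph V) (C : Finset V) : Prop :=
  ∀ u v, G.Adj u v → ¬ IsolatedEdge G u v → u ∈ C ∨ v ∈ C

theorem exists_prehomogeneous (C : Type*) [Finite C] (m : ℕ) :
    ∃ N, ∀ {ι : Type*} [LinearOrder ι] (S : Finset ι) (c : ι → ι → C), N ≤ #S →
      ∃ T ⊆ S, m ≤ #T ∧ ∃ col : ι → C, ∀ i ∈ T, ∀ j ∈ T, i < j → c i j = col i := by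
  classical
  have := Fintype.ofFinite C
  induction m with
  | zero => exact ⟨0, fun S c _ => ⟨∅, empty_subset S, le_rfl, fun i => c i i, by simp⟩⟩
  | succ m ih =>
    obtain ⟨N, hN⟩ := ih
    refine ⟨Fintype.card C * N + 1, fun S c hS => ?_⟩
    have hne : S.Nonempty := card_pos.mp (by omega)
    set x := S.min' hne
    obtain ⟨γ, -, hγ⟩ := exists_le_card_fiber_of_mul_le_card_of_maps_to (n := N)
      (s := S.erase x) (f := c x) (fun _ _ => mem_univ _) ⟨c x x, mem_univ _⟩
      (by rw [card_erase_of_mem (S.min'_mem hne), card_univ]; omega)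
    obtain ⟨T, hTS, hT, col, hcol⟩ := hN _ c hγ
    have hTS' : ∀ y ∈ T, y ∈ S ∧ y ≠ x ∧ c x y = γ := fun y hy => by
      simpa [and_comm, and_assoc] using hTS hy
    have hxT : x ∉ T := fun h => (hTS' x h).2.1 rfl
    refine ⟨insert x T, insert_subset (S.min'_mem hne) fun y hy => (hTS' y hy).1,
      by rw [card_insert_of_notMem hxT]; omega, update col x γ, fun i hi j hj hij => ?_⟩
    have hj : j ∈ T := (mem_insert.mp hj).resolve_left fun h => by
      subst h
      rcases mem_insert.mp hi with rfl | hi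
      · exact hij.false
      · exact (S.min'_le i (hTS' i hi).1).not_gt hij
    rcases mem_insert.mp hi with rfl | hi
    · simpa using (hTS' j hj).2.2
    · rw [update_of_ne (ne_of_mem_of_not_mem hi hxT)]
      exact hcol i hi j hj hij

theorem exists_homogeneous (C : Type*) [Finite C] (n : ℕ) :
    ∃ N, ∀ {ι : Type*} [LinearOrder ι] (S : Finset ι) (c : ι → ι → C), N ≤ #S →
      ∃ T ⊆ S, n ≤ #T ∧ ∃ γ, ∀ i ∈ T, ∀ j ∈ T, i < j → c i j = γ := by
  classical
  have := Fintype.ofFinite C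
  obtain ⟨N, hN⟩ := exists_prehomogeneous C (Fintype.card C * n + 1)
  refine ⟨N, fun S c hS => ?_⟩
  obtain ⟨T, hTS, hT, col, hcol⟩ := hN S c hS
  obtain ⟨i₀, hi₀⟩ := card_pos.mp (by omega : 0 < #T)
  obtain ⟨γ, -, hγ⟩ := exists_le_card_fiber_of_mul_le_card_of_maps_to (n := n)
    (s := T) (f := col) (fun _ _ => mem_univ _) ⟨col i₀, mem_univ _⟩ (by rw [card_univ]; omega)
  refine ⟨_, (filter_subset _ _).trans hTS, hγ, γ, fun i hi j hj hij => ?_⟩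
  rw [mem_filter] at hi hj
  rw [hcol i hi.1 j hj.1 hij, hi.2]

namespace SimpleGraph

variable {G : SimpleGraph V}

theorem nonempty_top_embedding_of_pairwise_adj {f : α → V}
    (hf : Pairwise fun i j => G.Adj (f i) (f j)) : Nonempty ((⊤ : SimpleGraph α) ↪g G) :=
  ⟨⟨⟨f, fun _ _ h => by_contra fun hij => (hf hij).ne h⟩,
    fun {_ _} => ⟨fun h hij => h.ne (congrArg f hij), fun hij => hf hij⟩⟩⟩

theorem nonempty_completeBipartiteGraph_embedding {a : α → V} {b : β → V}
    (ha : Injective a) (hb : Injective b) (hab : ∀ i j, G.Adj (a i) (b j))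
    (haa : Pairwise fun i j => ¬ G.Adj (a i) (a j))
    (hbb : Pairwise fun i j => ¬ G.Adj (b i) (b j)) :
    Nonempty (completeBipartiteGraph α β ↪g G) := by
  have hinj : Injective (Sum.elim a b) := by
    rintro (i | i) (j | j) h
    · exact congrArg _ (ha h)
    · exact ((hab i j).ne h).elim
    · exact ((hab j i).ne h.symm).elim
    · exact congrArg _ (hb h)
  refine ⟨⟨⟨Sum.elim a b, hinj⟩, ?_⟩⟩
  rintro (i | i) (j | j)
  · rcases eq_or_ne i j with rfl | hij
    · simp
    · simpa using haa hij
  · simpa using hab i j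
  · simpa using (hab j i).symm
  · rcases eq_or_ne i j with rfl | hij
    · simp
    · simpa using hbb hij

/-- `(⊥ : SimpleGraph α) □ F` is the disjoint union of `α` copies of `F`. -/
def Embedding.ofIndepCopies {F : SimpleGraph β} (t : α → β → V) (ht : Injective (uncurry t))
    (hF : ∀ i p q, G.Adj (t i p) (t i q) ↔ F.Adj p q)
    (hindep : Pairwise fun i j => ∀ p q, ¬ G.Adj (t i p) (t j q)) :
    ((⊥ : SimpleGraph α) □ F) ↪g G where
  toFun := uncurry t
  inj' := ht
  map_rel_iff' := by
    rintro ⟨i, p⟩ ⟨j, q⟩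
    rcases eq_or_ne i j with rfl | hij
    · simp [boxProd_adj, hF]
    · simp [boxProd_adj, hij, hindep hij p q]

theorem nonempty_option_embedding {H : SimpleGraph β} {P : SimpleGraph (Option β)} (e : H ↪g G)
    (hP : ∀ x y, P.Adj (some x) (some y) ↔ H.Adj x y) {c : V} (hc : ∀ x, e x ≠ c)
    (hcP : ∀ x, G.Adj c (e x) ↔ P.Adj none (some x)) : Nonempty (P ↪g G) := by
  have hinj : Injective fun o : Option β => o.elim c e := by
    rintro (_ | x) (_ | y) h
    · rfl
    · exact (hc y h.symm).elim
    · exact (hc x h).elim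
    · exact congrArg some (e.injective h)
  refine ⟨⟨⟨fun o => o.elim c e, hinj⟩, ?_⟩⟩
  rintro (_ | x) (_ | y)
  · simp
  · simpa using hcP y
  · simpa [G.adj_comm, P.adj_comm] using hcP x
  · simpa using (hP x y).symm

def Embedding.completeBipartiteGraph {α' β' : Type*} (f : α ↪ α') (g : β ↪ β') :
    completeBipartiteGraph α β ↪g completeBipartiteGraph α' β' where
  toEmbedding := f.sumMap g
  map_rel_iff' := by rintro (i | i) (j | j) <;> simp

end SimpleGraph

section HardGraphs

variable {n a b : ℕ}

theorem subdividedStar_adj_some {x y : Fin n × Fin 2} :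
    (subdividedStar n).Adj (some x) (some y) ↔ ((⊥ : SimpleGraph (Fin n)) □ ⊤).Adj x y := by
  obtain ⟨i, p⟩ := x; obtain ⟨j, q⟩ := y
  fin_cases p <;> fin_cases q <;> simp [subdividedStar, boxProd_adj, eq_comm]

theorem subdividedStar_adj_none {x : Fin n × Fin 2} :
    (subdividedStar n).Adj none (some x) ↔ x.2 = 0 := by
  obtain ⟨i, p⟩ := x
  fin_cases p <;> simp [subdividedStar]

theorem windmill_adj_some {x y : Fin n × Fin 2} :
    (windmill n).Adj (some x) (some y) ↔ ((⊥ : SimpleGraph (Fin n)) □ ⊤).Adj x y := by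
  obtain ⟨i, p⟩ := x; obtain ⟨j, q⟩ := y
  fin_cases p <;> fin_cases q <;> simp [windmill, boxProd_adj, eq_comm]

theorem windmill_adj_none (x : Fin n × Fin 2) : (windmill n).Adj none (some x) := by
  simp [windmill]

theorem trianglePacking_eq : trianglePacking n = (⊥ : SimpleGraph (Fin n)) □ ⊤ := by
  ext ⟨i, p⟩ ⟨j, q⟩
  simp only [trianglePacking, fromRel_adj, ne_eq, Prod.mk.injEq, not_and, boxProd_adj, bot_adj,
    false_and, top_adj, false_or]
  tauto

theorem wedgePacking_eq : wedgePacking n = (⊥ : SimpleGraph (Fin n)) □ pathGraph 3 := by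
  ext ⟨i, p⟩ ⟨j, q⟩
  fin_cases p <;> fin_cases q <;> simp [wedgePacking, boxProd_adj, pathGraph_adj, eq_comm]

def subdividedStarEmbeddingOfLE (h : a ≤ b) : subdividedStar a ↪g subdividedStar b where
  toEmbedding := ((Fin.castLEEmb h).prodMap (Function.Embedding.refl _)).optionMap
  map_rel_iff' := by rintro (_ | ⟨i, p⟩) (_ | ⟨j, q⟩) <;> simp [subdividedStar]

def windmillEmbeddingOfLE (h : a ≤ b) : windmill a ↪g windmill b where
  toEmbedding := ((Fin.castLEEmb h).prodMap (Function.Embedding.refl _)).optionMap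
  map_rel_iff' := by rintro (_ | ⟨i, p⟩) (_ | ⟨j, q⟩) <;> simp [windmill]

def trianglePackingEmbeddingOfLE (h : a ≤ b) : trianglePacking a ↪g trianglePacking b where
  toEmbedding := (Fin.castLEEmb h).prodMap (Function.Embedding.refl _)
  map_rel_iff' := by rintro ⟨i, p⟩ ⟨j, q⟩; simp [trianglePacking]

def wedgePackingEmbeddingOfLE (h : a ≤ b) : wedgePacking a ↪g wedgePacking b where
  toEmbedding := (Fin.castLEEmb h).prodMap (Function.Embedding.refl _)
  map_rel_iff' := by rintro ⟨i, p⟩ ⟨j, q⟩; simp [wedgePacking]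

end HardGraphs

theorem exists_fin_embedding_mem {S : Finset α} {m : ℕ} (h : m ≤ #S) :
    ∃ s : Fin m ↪ α, ∀ i, s i ∈ S :=
  ⟨(Fin.castLEEmb h).trans (S.equivFin.symm.toEmbedding.trans (Embedding.subtype _)),
    fun _ => (S.equivFin.symm _).2⟩

theorem exists_fin_embedding_mem_forall_or_forall_not (S : Finset α) (P : α → Prop) {m : ℕ}
    (h : m + m ≤ #S) : ∃ s : Fin m ↪ α, (∀ i, s i ∈ S) ∧ ((∀ i, P (s i)) ∨ ∀ i, ¬ P (s i)) := by
  classical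
  have := card_filter_add_card_filter_not (s := S) (p := P)
  rcases le_or_gt m #(S.filter P) with hm | hm
  · obtain ⟨s, hs⟩ := exists_fin_embedding_mem hm
    exact ⟨s, fun i => (mem_filter.1 (hs i)).1, Or.inl fun i => (mem_filter.1 (hs i)).2⟩
  · obtain ⟨s, hs⟩ := exists_fin_embedding_mem (S := S.filter (¬ P ·)) (m := m) (by omega)
    exact ⟨s, fun i => (mem_filter.1 (hs i)).1, Or.inr fun i => (mem_filter.1 (hs i)).2⟩

theorem exists_fin_embedding_injective_comp [Fintype α] [DecidableEq β] {f : α → β} {K m : ℕ}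
    (hf : ∀ b, #{a | f a = b} ≤ K) (h : K * m < Fintype.card α) :
    ∃ s : Fin m ↪ α, Injective (f ∘ s) := by
  have himage := card_le_mul_card_image univ K fun b _ => hf b
  obtain ⟨U, -, hU, hUimage⟩ := exists_subset_injOn_image_eq_of_surjOn (f := f) Set.univ
    (univ.image f) fun b hb => by simpa using hb
  obtain ⟨s, hs⟩ := exists_fin_embedding_mem (S := U) (m := m) (by
    rw [← card_image_of_injOn hU, hUimage]
    by_contra! hlt
    rw [card_univ] at himage
    nlinarith)
  exact ⟨s, fun i j hij => s.injective (hU (hs i) (hs j) hij)⟩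

theorem exists_orderEmbedding_adj_iff_pattern (k M : ℕ) :
    ∃ N, ∀ {V : Type*} (G : SimpleGraph V) (t : Fin N → Fin k → V),
      ∃ e : Fin M ↪o Fin N, ∃ γ : Fin k → Fin k → Prop,
        ∀ a b, a < b → ∀ p q, G.Adj (t (e a) p) (t (e b) q) ↔ γ p q := by
  obtain ⟨N, hN⟩ := exists_homogeneous (Fin k → Fin k → Prop) M
  refine ⟨N, fun G t => ?_⟩
  obtain ⟨T, -, hT, γ, hγ⟩ := hN univ (fun i j p q => G.Adj (t i p) (t j q)) (by simp)
  exact ⟨T.orderEmbOfCardLe hT, γ, fun a b hab p q => iff_of_eq (congrFun₂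
    (hγ _ (T.orderEmbOfCardLe_mem hT a) _ (T.orderEmbOfCardLe_mem hT b)
      ((T.orderEmbOfCardLe hT).strictMono hab)) p q)⟩

theorem exists_clique_or_biclique_or_indep_tuples (k n m : ℕ) :
    ∃ N, ∀ {V : Type*} (G : SimpleGraph V) (t : Fin N → Fin k → V), Injective (uncurry t) →
      Nonempty ((⊤ : SimpleGraph (Fin n)) ↪g G) ∨
      Nonempty (completeBipartiteGraph (Fin n) (Fin n) ↪g G) ∨
      ∃ s : Fin m ↪ Fin N, Pairwise fun i j => ∀ p q, ¬ G.Adj (t (s i) p) (t (s j) q) := by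
  obtain ⟨N, hN⟩ := exists_orderEmbedding_adj_iff_pattern k (n + n + m)
  refine ⟨N, fun G t ht => ?_⟩
  obtain ⟨e, γ, hlt⟩ := hN G t
  have hadj : Pairwise fun a b => ∀ p q, G.Adj (t (e a) p) (t (e b) q) → γ p q ∨ γ q p := by
    intro a b hab p q h
    rcases hab.lt_or_gt with hab | hab
    · exact Or.inl ((hlt a b hab p q).1 h)
    · exact Or.inr ((hlt b a hab q p).1 h.symm)
  have hinj : ∀ p, Injective fun a => t (e a) p :=
    fun p a b h => e.injective (congrArg Prod.fst (@ht (e a, p) (e b, p) h))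
  by_cases hdiag : ∃ p, γ p p
  · obtain ⟨p, hp⟩ := hdiag
    refine Or.inl (nonempty_top_embedding_of_pairwise_adj
      (f := fun i : Fin n => t (e (Fin.castLE (by omega) i)) p) fun i j hij => ?_)
    rcases (Fin.castLE_injective _).ne hij |>.lt_or_gt with h | h
    · exact (hlt _ _ h p p).2 hp
    · exact ((hlt _ _ h p p).2 hp).symm
  push Not at hdiag
  by_cases hoff : ∃ p q, γ p q
  · obtain ⟨p, q, hpq⟩ := hoff
    have hdiag' : ∀ p, Pairwise fun a b => ¬ G.Adj (t (e a) p) (t (e b) p) :=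
      fun p a b hab h => (hadj hab p p h).elim (hdiag p) (hdiag p)
    refine Or.inr (Or.inl (nonempty_completeBipartiteGraph_embedding
      (a := fun i : Fin n => t (e ⟨i, by omega⟩) p)
      (b := fun j : Fin n => t (e ⟨n + j, by omega⟩) q)
      ((hinj p).comp fun i j h => ?_) ((hinj q).comp fun i j h => ?_)
      (fun i j => (hlt _ _ (by simp only [Fin.lt_def]; omega) p q).2 hpq)
      (fun i j hij => hdiag' p (by simpa [Fin.ext_iff] using hij))
      (fun i j hij => hdiag' q (by simpa [Fin.ext_iff] using hij))))
    · simpa [Fin.ext_iff] using h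
    · simpa [Fin.ext_iff] using h
  push Not at hoff
  refine Or.inr (Or.inr ⟨(Fin.castLEEmb (by omega)).trans e.toEmbedding,
    fun i j hij p q h => ?_⟩)
  exact (hadj ((Fin.castLE_injective (Nat.le_add_left m (n + n))).ne hij) p q h).elim
    (hoff p q) (hoff q p)

theorem injective_uncurry_vecCons {k : ℕ} {t : ι → Fin k → V} {x : ι → V}
    (ht : Injective (uncurry t)) (hx : Injective x) (hxt : ∀ i j p, x i ≠ t j p) :
    Injective (uncurry fun i => Matrix.vecCons (x i) (t i)) := by
  rintro ⟨i, p⟩ ⟨j, q⟩ h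
  cases p using Fin.cases <;> cases q using Fin.cases <;>
    simp only [uncurry_apply_pair, Matrix.cons_val_zero, Matrix.cons_val_succ] at h
  · rw [hx h]
  · exact (hxt _ _ _ h).elim
  · exact (hxt _ _ _ h.symm).elim
  · simpa using @ht (i, _) (j, _) h

theorem exists_cherry_of_not_isolatedEdge {G : SimpleGraph V} {a b : V} (hab : G.Adj a b)
    (hiso : ¬ IsolatedEdge G a b) :
    ∃ e : V × V, (e = (a, b) ∨ e = (b, a)) ∧ G.Adj e.1 e.2 ∧ ∃ w, G.Adj e.1 w ∧ w ≠ e.2 := by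
  simp only [IsolatedEdge, hab, true_and, not_and_or, not_forall, exists_prop] at hiso
  rcases hiso with ⟨w, haw, hwb⟩ | ⟨w, hbw, hwa⟩
  · exact ⟨(a, b), Or.inl rfl, hab, w, haw, hwb⟩
  · exact ⟨(b, a), Or.inr rfl, hab.symm, w, hbw, hwa⟩

theorem exists_cherry_spines_of_weakVertexCover [DecidableEq V] {G : SimpleGraph V} {m : ℕ}
    (hG : ∀ C, IsWeakVertexCover G C → 2 * m ≤ #C) :
    ∃ P : Finset (V × V), #P = m ∧ (∀ e ∈ P, G.Adj e.1 e.2 ∧ ∃ w, G.Adj e.1 w ∧ w ≠ e.2) ∧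
      (P : Set (V × V)).PairwiseDisjoint fun e => ({e.1, e.2} : Finset V) := by
  induction m with
  | zero => exact ⟨∅, rfl, by simp, by simp⟩
  | succ m ih =>
    obtain ⟨P, hPm, hP, hdisj⟩ := ih fun C hC => by have := hG C hC; omega
    set C := P.biUnion fun e => ({e.1, e.2} : Finset V)
    have hC : #C ≤ 2 * m := by
      calc #C ≤ ∑ e ∈ P, #({e.1, e.2} : Finset V) := card_biUnion_le
        _ ≤ ∑ _e ∈ P, 2 := sum_le_sum fun _ _ => card_le_two
        _ = 2 * m := by rw [sum_const, smul_eq_mul, hPm, mul_comm]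
    have hnot : ¬ IsWeakVertexCover G C := fun h => by have := hG C h; omega
    simp only [IsWeakVertexCover, not_forall, not_or, exists_prop] at hnot
    obtain ⟨a, b, hab, hiso, ha, hb⟩ := hnot
    obtain ⟨e, he, hadj, hw⟩ := exists_cherry_of_not_isolatedEdge hab hiso
    have heC : ∀ x ∈ ({e.1, e.2} : Finset V), x ∉ C := by
      rcases he with rfl | rfl <;> simp [ha, hb]
    have heP : e ∉ P := fun h => heC e.1 (by simp) (mem_biUnion.2 ⟨e, h, by simp⟩)
    refine ⟨insert e P, by rw [card_insert_of_notMem heP, hPm], ?_, ?_⟩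
    · simpa [hadj, hw] using hP
    · rw [coe_insert]
      refine hdisj.insert fun d hd _ => Finset.disjoint_left.2 fun x hx hxd => heC x hx ?_
      exact mem_biUnion.2 ⟨d, hd, hxd⟩

theorem exists_cherries_of_weakVertexCover {G : SimpleGraph V} {m : ℕ}
    (hG : ∀ C, IsWeakVertexCover G C → 2 * m ≤ #C) :
    ∃ u v w : Fin m → V, (∀ i, G.Adj (u i) (v i)) ∧ (∀ i, G.Adj (u i) (w i)) ∧
      (∀ i, w i ≠ v i) ∧ Injective (uncurry fun i => ![u i, v i]) := by
  classical
  obtain ⟨P, hPm, hP, hdisj⟩ := exists_cherry_spines_of_weakVertexCover hG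
  set g := (P.equivFinOfCardEq hPm).symm
  choose w hw using fun i => (hP _ (g i).2).2
  refine ⟨fun i => (g i).1.1, fun i => (g i).1.2, w, fun i => (hP _ (g i).2).1,
    fun i => (hw i).1, fun i => (hw i).2, ?_⟩
  rintro ⟨i, p⟩ ⟨j, q⟩ h
  rcases eq_or_ne i j with rfl | hij
  · have := (hP _ (g i).2).1.ne
    fin_cases p <;> fin_cases q <;> simp_all [eq_comm]
  · have hd := hdisj (g i).2 (g j).2 (Subtype.coe_injective.ne (g.injective.ne hij))
    rw [Function.onFun, Finset.disjoint_left] at hd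
    exact (hd (a := uncurry (fun i => ![(g i).1.1, (g i).1.2]) (i, p))
      (by fin_cases p <;> simp) (by rw [h]; fin_cases q <;> simp)).elim

/-- Cherries `w i – u i – v i` of `G` whose spines `u i v i` form an induced matching. -/
structure IsInducedCherries (G : SimpleGraph V) (u v w : ι → V) : Prop where
  adj_spine (i : ι) : G.Adj (u i) (v i)
  adj_leaf (i : ι) : G.Adj (u i) (w i)
  leaf_ne (i : ι) : w i ≠ v i
  injective_spine : Injective (uncurry fun i => ![u i, v i])
  not_adj_spine : Pairwise fun i j => ∀ p q, ¬ G.Adj (![u i, v i] p) (![u j, v j] q)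

namespace IsInducedCherries

variable {G : SimpleGraph V} {u v w : ι → V}

theorem comp (h : IsInducedCherries G u v w) (s : κ ↪ ι) :
    IsInducedCherries G (u ∘ s) (v ∘ s) (w ∘ s) where
  adj_spine i := h.adj_spine (s i)
  adj_leaf i := h.adj_leaf (s i)
  leaf_ne i := h.leaf_ne (s i)
  injective_spine := h.injective_spine.comp (s.injective.prodMap injective_id)
  not_adj_spine _ _ hij := h.not_adj_spine (s.injective.ne hij)

theorem spine_adj_iff (h : IsInducedCherries G u v w) (i : ι) (p q : Fin 2) :
    G.Adj (![u i, v i] p) (![u i, v i] q) ↔ (⊤ : SimpleGraph (Fin 2)).Adj p q := by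
  have := h.adj_spine i
  fin_cases p <;> fin_cases q <;> simp [this, this.symm]

theorem leaf_ne_spine (h : IsInducedCherries G u v w) (i j : ι) (p : Fin 2) :
    w i ≠ ![u j, v j] p := by
  rcases eq_or_ne i j with rfl | hij
  · fin_cases p
    exacts [(h.adj_leaf i).ne.symm, h.leaf_ne i]
  · intro hw
    exact h.not_adj_spine hij 0 p (by simpa [← hw] using h.adj_leaf i)

theorem cherry_adj_iff_top (h : IsInducedCherries G u v w) {i : ι} (hwv : G.Adj (w i) (v i))
    (p q : Fin 3) :
    G.Adj (![w i, u i, v i] p) (![w i, u i, v i] q) ↔ (⊤ : SimpleGraph (Fin 3)).Adj p q := by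
  have huv := h.adj_spine i
  have huw := h.adj_leaf i
  fin_cases p <;> fin_cases q <;> simp [huv, huw, hwv, huv.symm, huw.symm, hwv.symm]

theorem cherry_adj_iff_pathGraph (h : IsInducedCherries G u v w) {i : ι}
    (hwv : ¬ G.Adj (w i) (v i)) (p q : Fin 3) :
    G.Adj (![w i, u i, v i] p) (![w i, u i, v i] q) ↔ (pathGraph 3).Adj p q := by
  have huv := h.adj_spine i
  have huw := h.adj_leaf i
  have hvw : ¬ G.Adj (v i) (w i) := fun h' => hwv h'.symm
  fin_cases p <;> fin_cases q <;> simp [pathGraph_adj, huv, huw, hwv, huv.symm, huw.symm, hvw]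

theorem nonempty_subdividedStar_or_windmill [Fintype ι] [DecidableEq V]
    (h : IsInducedCherries G u v w) {a : V} {n : ℕ}
    (ha : n + n ≤ #{i | w i = a}) :
    Nonempty (subdividedStar n ↪g G) ∨ Nonempty (windmill n ↪g G) := by
  obtain ⟨s, hs, hv⟩ := exists_fin_embedding_mem_forall_or_forall_not _ (fun i => G.Adj a (v i)) ha
  have hws : ∀ i, w (s i) = a := fun i => (mem_filter.1 (hs i)).2
  have hua : ∀ i, G.Adj a (u (s i)) := fun i => hws i ▸ (h.adj_leaf (s i)).symm
  have hc := h.comp s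
  let e := Embedding.ofIndepCopies _ hc.injective_spine hc.spine_adj_iff hc.not_adj_spine
  have hea : ∀ x, e x ≠ a := fun x => hws x.1 ▸ (hc.leaf_ne_spine x.1 x.1 x.2).symm
  rcases hv with hv | hv
  · refine Or.inr (nonempty_option_embedding e (fun _ _ => windmill_adj_some) hea ?_)
    rintro ⟨i, p⟩
    fin_cases p
    · simpa [e, Embedding.ofIndepCopies, windmill_adj_none] using hua i
    · simpa [e, Embedding.ofIndepCopies, windmill_adj_none] using hv i
  · refine Or.inl (nonempty_option_embedding e (fun _ _ => subdividedStar_adj_some) hea ?_)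
    rintro ⟨i, p⟩
    fin_cases p
    · simpa [e, Embedding.ofIndepCopies, subdividedStar_adj_none] using hua i
    · simpa [e, Embedding.ofIndepCopies, subdividedStar_adj_none] using hv i

end IsInducedCherries

theorem exists_clique_or_biclique_or_packing_of_injective_leaves (n : ℕ) :
    ∃ N, ∀ {V : Type*} (G : SimpleGraph V) (u v w : Fin N → V), IsInducedCherries G u v w →
      Injective w →
      Nonempty ((⊤ : SimpleGraph (Fin n)) ↪g G) ∨
      Nonempty (completeBipartiteGraph (Fin n) (Fin n) ↪g G) ∨
      Nonempty (trianglePacking n ↪g G) ∨ Nonempty (wedgePacking n ↪g G) := by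
  obtain ⟨N, hN⟩ := exists_clique_or_biclique_or_indep_tuples 3 n n
  refine ⟨N + N, fun G u v w h hw => ?_⟩
  obtain ⟨s, -, hwv⟩ := exists_fin_embedding_mem_forall_or_forall_not (m := N) univ
    (fun i => G.Adj (w i) (v i)) (by simp)
  have hc := h.comp s
  have hinj := injective_uncurry_vecCons hc.injective_spine (hw.comp s.injective) hc.leaf_ne_spine
  obtain hK | hK | ⟨s', hs'⟩ := hN G _ hinj
  · exact Or.inl hK
  · exact Or.inr (Or.inl hK)
  have hinj' : Injective (uncurry fun i => ![w (s (s' i)), u (s (s' i)), v (s (s' i))]) :=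
    hinj.comp (s'.injective.prodMap injective_id)
  rcases hwv with hwv | hwv
  · rw [trianglePacking_eq]
    exact Or.inr (Or.inr (Or.inl
      ⟨Embedding.ofIndepCopies _ hinj' (fun i => hc.cherry_adj_iff_top (hwv (s' i))) hs'⟩))
  · rw [wedgePacking_eq]
    exact Or.inr (Or.inr (Or.inr
      ⟨Embedding.ofIndepCopies _ hinj' (fun i => hc.cherry_adj_iff_pathGraph (hwv (s' i))) hs'⟩))

theorem exists_hard_embedding_of_weakVertexCover (n : ℕ) :
    ∃ c, ∀ {V : Type*} (G : SimpleGraph V), (∀ C, IsWeakVertexCover G C → c < #C) →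
      Nonempty ((⊤ : SimpleGraph (Fin n)) ↪g G) ∨
      Nonempty (completeBipartiteGraph (Fin n) (Fin n) ↪g G) ∨
      Nonempty (subdividedStar n ↪g G) ∨ Nonempty (windmill n ↪g G) ∨
      Nonempty (trianglePacking n ↪g G) ∨ Nonempty (wedgePacking n ↪g G) := by
  classical
  obtain ⟨N, hN⟩ := exists_clique_or_biclique_or_packing_of_injective_leaves n
  obtain ⟨M, hM⟩ := exists_clique_or_biclique_or_indep_tuples 2 n ((n + n) * N + 1)
  refine ⟨2 * M, fun G hG => ?_⟩
  obtain ⟨u, v, w, huv, huw, hwv, hinj⟩ :=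
    exists_cherries_of_weakVertexCover (m := M) fun C hC => (hG C hC).le
  obtain hK | hK | ⟨s, hs⟩ := hM G _ hinj
  · exact Or.inl hK
  · exact Or.inr (Or.inl hK)
  have h : IsInducedCherries G (u ∘ s) (v ∘ s) (w ∘ s) :=
    ⟨fun _ => huv _, fun _ => huw _, fun _ => hwv _,
      hinj.comp (s.injective.prodMap injective_id), hs⟩
  -- A leaf shared by `n + n` cherries is the centre of a star or a windmill; otherwise the
  -- leaves of the `(n + n) * N + 1` cherries take at least `N + 1` distinct values.
  by_cases hA : ∃ a, n + n ≤ #{i | (w ∘ s) i = a}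
  · obtain ⟨a, ha⟩ := hA
    obtain hK | hK := h.nonempty_subdividedStar_or_windmill ha
    · exact Or.inr (Or.inr (Or.inl hK))
    · exact Or.inr (Or.inr (Or.inr (Or.inl hK)))
  push Not at hA
  obtain ⟨s', hs'⟩ := exists_fin_embedding_injective_comp (m := N) (fun a => (hA a).le) (by simp)
  obtain hK | hK | hK | hK := hN G _ _ _ (h.comp s') hs'
  · exact Or.inl hK
  · exact Or.inr (Or.inl hK)
  · exact Or.inr (Or.inr (Or.inr (Or.inr (Or.inl hK))))
  · exact Or.inr (Or.inr (Or.inr (Or.inr (Or.inr hK))))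

/-- If a class `ℋ` of finite graphs has unbounded weak vertex-cover number (no constant
bounds the size of a minimum vertex cover of the graphs after deleting isolated edges),
then `ℋ` contains arbitrarily large cliques, bicliques, subdivided stars, windmills,
triangle packings, or wedge packings as induced subgraphs. -/
theorem unbounded_weak_vertexCover_contains_hard_class
    (ℋ : Set (Σ n : ℕ, SimpleGraph (Fin n)))
    (hunb : ∀ c : ℕ, ∃ H ∈ ℋ, ∀ C : Finset (Fin H.1),
      (∀ u v, H.2.Adj u v → ¬ IsolatedEdge H.2 u v → u ∈ C ∨ v ∈ C) → c < C.card) :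
    (∀ n : ℕ, ∃ H ∈ ℋ, Nonempty ((⊤ : SimpleGraph (Fin n)) ↪g H.2)) ∨
    (∀ n : ℕ, ∃ H ∈ ℋ, Nonempty (completeBipartiteGraph (Fin n) (Fin n) ↪g H.2)) ∨
    (∀ n : ℕ, ∃ H ∈ ℋ, Nonempty (subdividedStar n ↪g H.2)) ∨
    (∀ n : ℕ, ∃ H ∈ ℋ, Nonempty (windmill n ↪g H.2)) ∨
    (∀ n : ℕ, ∃ H ∈ ℋ, Nonempty (trianglePacking n ↪g H.2)) ∨
    (∀ n : ℕ, ∃ H ∈ ℋ, Nonempty (wedgePacking n ↪g H.2)) := by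
  by_contra hcon
  simp only [not_or, not_forall, not_exists, not_and] at hcon
  obtain ⟨⟨n₁, h₁⟩, ⟨n₂, h₂⟩, ⟨n₃, h₃⟩, ⟨n₄, h₄⟩, ⟨n₅, h₅⟩, ⟨n₆, h₆⟩⟩ := hcon
  obtain ⟨c, hc⟩ := exists_hard_embedding_of_weakVertexCover (n₁ + n₂ + n₃ + n₄ + n₅ + n₆)
  obtain ⟨H, hH, hcover⟩ := hunb c
  obtain h | h | h | h | h | h := hc H.2 hcover
  · exact h₁ H hH (h.map (Embedding.completeGraph (Fin.castLEEmb (by omega))).trans)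
  · exact h₂ H hH (h.map (Embedding.completeBipartiteGraph (Fin.castLEEmb (by omega))
      (Fin.castLEEmb (by omega))).trans)
  · exact h₃ H hH (h.map (subdividedStarEmbeddingOfLE (by omega)).trans)
  · exact h₄ H hH (h.map (windmillEmbeddingOfLE (by omega)).trans)
  · exact h₅ H hH (h.map (trianglePackingEmbeddingOfLE (by omega)).trans)
  · exact h₆ H hH (h.map (wedgePackingEmbeddingOfLE (by omega)).trans)
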